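/- Let {X_n} satisfy AIM(x_n) with separation sequence q_n and mixing coefficients α_n, suppose n·F̄(x_n) → τ > 0, let (p_n) be positive integers with p_n = o(n), n·α_n = o(p_n), q_n = o(p_n), and assume P(M_n ≤ x_n) → L for some L ∈ (0,1). Let (s_n) be positive integers with p_n = o(s_n) and s_n = o(n), and set t_n = ⌊n/(s_n+q_n)⌋, X^i_j = X_{(i−1)(s_n+q_n)+j} and M^i_{j,k} = max{X^i_{j+1},…,X^i_k}. Then ∑_{i=1}^{t_n} P(M^i_{0,s_n−p_n} > x_n, M^i_{s_n−p_n,s_n} ≤ x_n) → −log L and ∑_{i=1}^{t_n} P(M^i_{s_n−p_n,s_n} > x_n) → 0 as n → ∞; in particular the second sum is o(the first sum). -/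

import Mathlib

open MeasureTheory Filter Finset Asymptotics

/-- Probability of an event as a real number. -/
noncomputable def pr {Ω : Type*} [MeasurableSpace Ω] (P : Measure Ω) (A : Set Ω) : ℝ :=
  (P A).toReal

/-- The event that `X i ≤ x` for every index `i` in the set `S`;
this is the event `{M(S) ≤ x}` where `M(S) = max {X i : i ∈ S}`. -/
def allLe {Ω : Type*} (X : ℕ → Ω → ℝ) (S : Set ℕ) (x : ℝ) : Set Ω :=
  {ω | ∀ i ∈ S, X i ω ≤ x}

/-- `α` is a sequence of AIM mixing coefficients for `X` relative to thresholds `xs`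
with separation sequence `q`: for any two intervals `I₁ = [a,b]`, `I₂ = [b+qₙ+1, c]`
contained in `{1,…,n}`, separated by `qₙ`, each of cardinality at least `qₙ`,
the maximum-based discrepancy is bounded by `α n`. -/
def AIMBound {Ω : Type*} [MeasurableSpace Ω] (P : Measure Ω) (X : ℕ → Ω → ℝ)
    (xs : ℕ → ℝ) (q : ℕ → ℕ) (α : ℕ → ℝ) : Prop :=
  ∀ n a b c : ℕ, 1 ≤ a → a ≤ b → b + q n + 1 ≤ c → c ≤ n →
    q n ≤ b + 1 - a → q n ≤ c - (b + q n) →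
    |pr P (allLe X (Set.Icc a b ∪ Set.Icc (b + q n + 1) c) (xs n)) -
      pr P (allLe X (Set.Icc a b) (xs n)) *
        pr P (allLe X (Set.Icc (b + q n + 1) c) (xs n))| ≤ α n

open Topology

/-!
Cut `{1,…,n}` into `tₙ` blocks of length `sₙ` separated by gaps of length `qₙ`. By the union
bound, deleting the gaps and the leftover end changes `P(Mₙ ≤ xₙ)` by at most
`(tₙ qₙ + sₙ + 2qₙ) F̄(xₙ) = o(1)`, and AIM splits off one block at a time at cost `αₙ`, with
`tₙ αₙ ≤ n αₙ / sₙ = o(1)`. Hence `∏ᵢ Qᵢ → L` for the block probabilities `Qᵢ`. Each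
`1 - Qᵢ ≤ sₙ F̄(xₙ) = o(1)`, so `log ∏ᵢ Qᵢ = -(1 + o(1)) ∑ᵢ (1 - Qᵢ)` and `∑ᵢ (1 - Qᵢ) → -log L`.
The last `pₙ` indices of the blocks carry total probability at most
`tₙ pₙ F̄(xₙ) ≤ (pₙ / sₙ) n F̄(xₙ) → 0`, and the first sum is the difference of these two.
-/

section AllLe

variable {Ω : Type*} {X : ℕ → Ω → ℝ} {x : ℝ}

lemma allLe_anti {S T : Set ℕ} (h : S ⊆ T) : allLe X T x ⊆ allLe X S x :=
  fun _ hω i hi => hω i (h hi)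

lemma allLe_empty : allLe X ∅ x = Set.univ := by
  ext; simp [allLe]

lemma allLe_union (S T : Set ℕ) : allLe X (S ∪ T) x = allLe X S x ∩ allLe X T x := by
  ext; simp only [allLe, Set.mem_union, or_imp, forall_and, Set.mem_inter_iff, Set.mem_ofPred_eq]

lemma setOf_forall_le_eq_allLe (c a b : ℕ) :
    {ω | ∀ j, a ≤ j → j ≤ b → X (c + j) ω ≤ x} = allLe X (Set.Icc (c + a) (c + b)) x := by
  ext ω
  simp only [allLe, Set.mem_ofPred_eq, Set.mem_Icc]
  constructor
  · rintro h i ⟨hai, hib⟩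
    simpa [Nat.add_sub_cancel' (by omega : c ≤ i)] using h (i - c) (by omega) (by omega)
  · exact fun h j haj hjb => h (c + j) ⟨by omega, by omega⟩

lemma setOf_exists_lt_eq_compl_allLe (c a b : ℕ) :
    {ω | ∃ j, a ≤ j ∧ j ≤ b ∧ x < X (c + j) ω} = (allLe X (Set.Icc (c + a) (c + b)) x)ᶜ := by
  rw [← setOf_forall_le_eq_allLe]
  ext
  simp

end AllLe

section Probability

variable {Ω : Type*} [MeasurableSpace Ω] {P : Measure Ω} [IsProbabilityMeasure P]
  {X : ℕ → Ω → ℝ} {F : ℝ → ℝ} {x : ℝ}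

lemma measurableSet_allLe (hmeas : ∀ i, Measurable (X i)) (S : Set ℕ) :
    MeasurableSet (allLe X S x) := by
  have : allLe X S x = ⋂ i ∈ S, {ω | X i ω ≤ x} := by ext; simp [allLe]
  rw [this]
  exact .biInter S.to_countable fun i _ => measurableSet_le (hmeas i) measurable_const

lemma pr_le_one (A : Set Ω) : pr P A ≤ 1 := measureReal_le_one

lemma pr_exists_lt (hmeas : ∀ i, Measurable (X i)) (c a b : ℕ) :
    pr P {ω | ∃ j, a ≤ j ∧ j ≤ b ∧ x < X (c + j) ω} =
      1 - pr P (allLe X (Set.Icc (c + a) (c + b)) x) := by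
  rw [setOf_exists_lt_eq_compl_allLe, pr, ← measureReal_def,
    measureReal_compl (measurableSet_allLe hmeas _), probReal_univ]
  rfl

lemma pr_exists_lt_and_forall_le (hmeas : ∀ i, Measurable (X i)) {c d s : ℕ} (hds : d ≤ s) :
    pr P {ω | (∃ j, 1 ≤ j ∧ j ≤ d ∧ x < X (c + j) ω) ∧ ∀ j, d + 1 ≤ j → j ≤ s → X (c + j) ω ≤ x} =
      pr P (allLe X (Set.Icc (c + (d + 1)) (c + s)) x) -
        pr P (allLe X (Set.Icc (c + 1) (c + s)) x) := by
  have hsplit :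
      Set.Icc (c + 1) (c + s) = Set.Icc (c + 1) (c + d) ∪ Set.Icc (c + (d + 1)) (c + s) := by
    ext; simp only [Set.mem_Icc, Set.mem_union]; omega
  have hevent : {ω | (∃ j, 1 ≤ j ∧ j ≤ d ∧ x < X (c + j) ω) ∧
      ∀ j, d + 1 ≤ j → j ≤ s → X (c + j) ω ≤ x} =
      allLe X (Set.Icc (c + (d + 1)) (c + s)) x \ allLe X (Set.Icc (c + 1) (c + s)) x := by
    rw [Set.ofPred_and, setOf_exists_lt_eq_compl_allLe, setOf_forall_le_eq_allLe, hsplit,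
      allLe_union, Set.sdiff_inter_self_eq_sdiff, Set.inter_comm, Set.sdiff_eq]
  rw [hevent, pr, ← measureReal_def, measureReal_sdiff (allLe_anti (by rw [hsplit]; simp))
    (measurableSet_allLe hmeas _)]
  rfl

lemma one_sub_nonneg_of_pr_eq (hF : ∀ i, 1 ≤ i → ∀ t : ℝ, pr P {ω | X i ω ≤ t} = F t) :
    0 ≤ 1 - F x := by
  rw [← hF 1 le_rfl x, sub_nonneg]
  exact pr_le_one _

lemma pr_lt_eq_one_sub (hmeas : ∀ i, Measurable (X i))
    (hF : ∀ i, 1 ≤ i → ∀ t : ℝ, pr P {ω | X i ω ≤ t} = F t) {i : ℕ} (hi : 1 ≤ i) :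
    pr P {ω | x < X i ω} = 1 - F x := by
  have : {ω | x < X i ω} = {ω | X i ω ≤ x}ᶜ := by ext; simp
  rw [this, ← hF i hi x, pr, ← measureReal_def,
    measureReal_compl (measurableSet_le (hmeas i) measurable_const), probReal_univ]
  rfl

lemma pr_allLe_sub_pr_allLe_le (hmeas : ∀ i, Measurable (X i))
    (hF : ∀ i, 1 ≤ i → ∀ t : ℝ, pr P {ω | X i ω ≤ t} = F t)
    {A B : Finset ℕ} (hB : ∀ i ∈ B, 1 ≤ i) {m : ℕ} (hm : #(B \ A) ≤ m) :
    pr P (allLe X A x) - pr P (allLe X B x) ≤ m * (1 - F x) := by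
  have hcover : allLe X A x ⊆ allLe X B x ∪ ⋃ i ∈ B \ A, {ω | x < X i ω} := by
    intro ω hω
    by_contra h
    simp only [Set.mem_union, Set.mem_iUnion, not_or, allLe, Set.mem_ofPred_eq, not_forall,
      not_exists] at h
    obtain ⟨⟨i, hiB, hi⟩, hout⟩ := h
    have hiA : i ∉ A := fun hiA => hi (hω i hiA)
    exact hout i (mem_sdiff.2 ⟨hiB, hiA⟩) (not_le.1 hi)
  calc pr P (allLe X A x) - pr P (allLe X B x)
      ≤ ∑ i ∈ B \ A, pr P {ω | x < X i ω} := by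
        rw [sub_le_iff_le_add']
        exact (measureReal_mono hcover).trans ((measureReal_union_le _ _).trans
          (add_le_add_right (measureReal_biUnion_finset_le _ _) _))
    _ = #(B \ A) * (1 - F x) := by
        rw [sum_congr rfl fun i hi => pr_lt_eq_one_sub hmeas hF (hB i (mem_sdiff.1 hi).1),
          sum_const, nsmul_eq_mul]
    _ ≤ m * (1 - F x) := by gcongr; exact one_sub_nonneg_of_pr_eq hF

lemma one_sub_pr_allLe_Icc_le (hmeas : ∀ i, Measurable (X i))
    (hF : ∀ i, 1 ≤ i → ∀ t : ℝ, pr P {ω | X i ω ≤ t} = F t) {a b : ℕ} (ha : 1 ≤ a) :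
    1 - pr P (allLe X (Set.Icc a b) x) ≤ (b + 1 - a : ℕ) * (1 - F x) := by
  have h := pr_allLe_sub_pr_allLe_le hmeas hF (x := x) (A := ∅) (B := Icc a b)
    (fun i hi => ha.trans (mem_Icc.1 hi).1) (by rw [sdiff_empty, Nat.card_Icc])
  rwa [coe_empty, allLe_empty, coe_Icc, pr, ← measureReal_def, probReal_univ] at h

lemma abs_pr_allLe_Icc_one_sub_le (hmeas : ∀ i, Measurable (X i))
    (hF : ∀ i, 1 ≤ i → ∀ t : ℝ, pr P {ω | X i ω ≤ t} = F t) {b c : ℕ} (hbc : b ≤ c) :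
    |pr P (allLe X (Set.Icc 1 c) x) - pr P (allLe X (Set.Icc 1 b) x)| ≤
      (c - b : ℕ) * (1 - F x) := by
  have h := pr_allLe_sub_pr_allLe_le hmeas hF (x := x) (A := Icc 1 b) (B := Icc 1 c)
    (fun i hi => (mem_Icc.1 hi).1) (m := c - b)
    (by rw [card_sdiff_of_subset (Icc_subset_Icc_right hbc), Nat.card_Icc, Nat.card_Icc]; omega)
  rw [coe_Icc, coe_Icc] at h
  rw [abs_sub_comm, abs_of_nonneg (sub_nonneg.2 ?_)]
  · exact h
  · exact measureReal_mono (allLe_anti (Set.Icc_subset_Icc_right hbc))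

end Probability

section Blocks

variable {Ω : Type*} [MeasurableSpace Ω] {P : Measure Ω} [IsProbabilityMeasure P]
  {X : ℕ → Ω → ℝ} {F : ℝ → ℝ} {xs : ℕ → ℝ} {q : ℕ → ℕ} {α : ℕ → ℝ}

lemma abs_pr_allLe_Icc_sub_mul_le (hmeas : ∀ i, Measurable (X i))
    (hF : ∀ i, 1 ≤ i → ∀ t : ℝ, pr P {ω | X i ω ≤ t} = F t) (hbd : AIMBound P X xs q α)
    {n b r : ℕ} (hb : 1 ≤ b) (hqb : q n ≤ b) (hr : 1 ≤ r) (hqr : q n ≤ r) (hn : b + q n + r ≤ n) :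
    |pr P (allLe X (Set.Icc 1 (b + q n + r)) (xs n)) -
        pr P (allLe X (Set.Icc 1 b) (xs n)) *
          pr P (allLe X (Set.Icc (b + q n + 1) (b + q n + r)) (xs n))| ≤
      |α n| + q n * (1 - F (xs n)) := by
  set W := pr P (allLe X (Set.Icc 1 b ∪ Set.Icc (b + q n + 1) (b + q n + r)) (xs n))
  have hmix := hbd n 1 b (b + q n + r) le_rfl hb (by omega) hn (by omega) (by omega)
  have hgap : |pr P (allLe X (Set.Icc 1 (b + q n + r)) (xs n)) - W| ≤ q n * (1 - F (xs n)) := by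
    have hsub : Set.Icc 1 b ∪ Set.Icc (b + q n + 1) (b + q n + r) ⊆ Set.Icc 1 (b + q n + r) := by
      intro i; simp only [Set.mem_union, Set.mem_Icc]; omega
    have h := pr_allLe_sub_pr_allLe_le hmeas hF (x := xs n)
      (A := Icc 1 b ∪ Icc (b + q n + 1) (b + q n + r)) (B := Icc 1 (b + q n + r))
      (fun i hi => (mem_Icc.1 hi).1) (m := q n) <| by
        calc #(Icc 1 (b + q n + r) \ (Icc 1 b ∪ Icc (b + q n + 1) (b + q n + r)))
            ≤ #(Icc (b + 1) (b + q n)) := card_le_card fun i => by simp; omega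
          _ = q n := by rw [Nat.card_Icc]; omega
    rw [coe_union, coe_Icc, coe_Icc, coe_Icc] at h
    rw [abs_sub_comm, abs_of_nonneg (sub_nonneg.2 ?_)]
    · exact h
    · exact measureReal_mono (allLe_anti hsub)
  calc _ ≤ |pr P (allLe X (Set.Icc 1 (b + q n + r)) (xs n)) - W| +
        |W - pr P (allLe X (Set.Icc 1 b) (xs n)) *
          pr P (allLe X (Set.Icc (b + q n + 1) (b + q n + r)) (xs n))| := abs_sub_le _ _ _
    _ ≤ _ := by rw [add_comm]; exact add_le_add (hmix.trans (le_abs_self _)) hgap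

lemma abs_pr_allLe_Icc_sub_prod_le (hmeas : ∀ i, Measurable (X i))
    (hF : ∀ i, 1 ≤ i → ∀ t : ℝ, pr P {ω | X i ω ≤ t} = F t) (hbd : AIMBound P X xs q α)
    {n s : ℕ} (hs : 1 ≤ s) (hqs : q n ≤ s) :
    ∀ m : ℕ, m * (s + q n) + s ≤ n →
      |pr P (allLe X (Set.Icc 1 (m * (s + q n) + s)) (xs n)) -
          ∏ i ∈ Icc 1 (m + 1),
            pr P (allLe X (Set.Icc ((i - 1) * (s + q n) + 1) ((i - 1) * (s + q n) + s)) (xs n))| ≤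
        m * (|α n| + q n * (1 - F (xs n)))
  | 0, _ => by simp
  | m + 1, hm => by
    have hk : (m + 1) * (s + q n) = m * (s + q n) + s + q n := by ring
    have ih := abs_pr_allLe_Icc_sub_prod_le hmeas hF hbd hs hqs m (by rw [hk] at hm; omega)
    have hstep := abs_pr_allLe_Icc_sub_mul_le hmeas hF hbd (b := m * (s + q n) + s) (r := s)
      (by omega) (by omega) hs hqs (by rw [hk] at hm; omega)
    rw [prod_Icc_succ_top (by omega), Nat.add_sub_cancel, hk]
    set Q := pr P (allLe X
      (Set.Icc (m * (s + q n) + s + q n + 1) (m * (s + q n) + s + q n + s)) (xs n))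
    set V := pr P (allLe X (Set.Icc 1 (m * (s + q n) + s)) (xs n))
    set R := ∏ i ∈ Icc 1 (m + 1),
      pr P (allLe X (Set.Icc ((i - 1) * (s + q n) + 1) ((i - 1) * (s + q n) + s)) (xs n))
    have hQ : |Q| ≤ 1 := abs_le.2 ⟨by linarith [show 0 ≤ Q from measureReal_nonneg], pr_le_one _⟩
    calc _ ≤ |pr P (allLe X (Set.Icc 1 (m * (s + q n) + s + q n + s)) (xs n)) - V * Q| +
          |V - R| * |Q| := by rw [← abs_mul, sub_mul]; exact abs_sub_le _ _ _
      _ ≤ (|α n| + q n * (1 - F (xs n))) + m * (|α n| + q n * (1 - F (xs n))) * 1 := by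
          gcongr
          exact (abs_nonneg _).trans ih
      _ = _ := by push_cast; ring

lemma abs_prod_blocks_sub_pr_allLe_le (hmeas : ∀ i, Measurable (X i))
    (hF : ∀ i, 1 ≤ i → ∀ t : ℝ, pr P {ω | X i ω ≤ t} = F t) (hbd : AIMBound P X xs q α)
    {n s : ℕ} (hs : 1 ≤ s) (hqs : q n ≤ s) :
    |∏ i ∈ Icc 1 (n / (s + q n)),
          pr P (allLe X (Set.Icc ((i - 1) * (s + q n) + 1) ((i - 1) * (s + q n) + s)) (xs n)) -
        pr P (allLe X (Set.Icc 1 n) (xs n))| ≤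
      (n / (s + q n) : ℕ) * (|α n| + q n * (1 - F (xs n))) + (s + 2 * q n) * (1 - F (xs n)) := by
  have hF0 : 0 ≤ 1 - F (xs n) := one_sub_nonneg_of_pr_eq hF
  have hdiv := Nat.div_add_mod' n (s + q n)
  have hmod := Nat.mod_lt n (show 0 < s + q n by omega)
  cases ht : n / (s + q n) with
  | zero =>
    rw [ht, zero_mul, zero_add] at hdiv
    have hle := one_sub_pr_allLe_Icc_le hmeas hF (x := xs n) (b := n) le_rfl
    rw [Icc_eq_empty (by omega), prod_empty,
      abs_of_nonneg (sub_nonneg.2 (pr_le_one _)), Nat.cast_zero, zero_mul, zero_add]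
    refine hle.trans ?_
    gcongr
    exact_mod_cast (show n + 1 - 1 ≤ s + 2 * q n by omega)
  | succ m =>
    rw [ht, add_one_mul] at hdiv
    have hchain := abs_pr_allLe_Icc_sub_prod_le hmeas hF hbd hs hqs m (by omega)
    have hext := abs_pr_allLe_Icc_one_sub_le hmeas hF (x := xs n)
      (show m * (s + q n) + s ≤ n by omega)
    have hgap : ((n - (m * (s + q n) + s) : ℕ) : ℝ) ≤ s + 2 * q n := by
      exact_mod_cast (show n - (m * (s + q n) + s) ≤ s + 2 * q n by omega)
    rw [abs_sub_comm] at hchain hext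
    calc _ ≤ _ := abs_sub_le _ (pr P (allLe X (Set.Icc 1 (m * (s + q n) + s)) (xs n))) _
      _ ≤ m * (|α n| + q n * (1 - F (xs n))) + (s + 2 * q n) * (1 - F (xs n)) :=
          add_le_add hchain (hext.trans (by gcongr))
      _ ≤ _ := by gcongr; exact_mod_cast m.le_succ

end Blocks

lemma abs_one_sub_add_log_le {y : ℝ} (hy : 1 / 2 ≤ y) (hy1 : y ≤ 1) :
    |1 - y + Real.log y| ≤ 2 * (1 - y) ^ 2 := by
  have h := Real.abs_log_sub_add_sum_range_le (x := 1 - y)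
    (by rw [abs_of_nonneg (by linarith)]; linarith) 1
  rw [abs_of_nonneg (by linarith : (0 : ℝ) ≤ 1 - y), sub_sub_cancel] at h
  simp only [range_one, sum_singleton, zero_add, Nat.cast_zero, pow_one, div_one] at h
  calc _ ≤ (1 - y) ^ 2 / y := h
    _ ≤ 2 * (1 - y) ^ 2 := by rw [div_le_iff₀ (by linarith)]; nlinarith [sq_nonneg (1 - y)]

lemma tendsto_sum_one_sub_of_tendsto_prod {β ι : Type*} {l : Filter β} {I : β → Finset ι}
    {y : β → ι → ℝ} {ε : β → ℝ} {L : ℝ} (hL : 0 < L)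
    (hy : ∀ b, ∀ i ∈ I b, y b i ≤ 1 ∧ 1 - y b i ≤ ε b) (hε : Tendsto ε l (𝓝 0))
    (hprod : Tendsto (fun b => ∏ i ∈ I b, y b i) l (𝓝 L)) :
    Tendsto (fun b => ∑ i ∈ I b, (1 - y b i)) l (𝓝 (-Real.log L)) := by
  have hlog : Tendsto (fun b => Real.log (∏ i ∈ I b, y b i)) l (𝓝 (Real.log L)) :=
    (Real.continuousAt_log hL.ne').tendsto.comp hprod
  have hclose : ∀ᶠ b in l, |∑ i ∈ I b, (1 - y b i) + Real.log (∏ i ∈ I b, y b i)| ≤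
      -4 * |ε b| * Real.log (∏ i ∈ I b, y b i) := by
    filter_upwards [hε.eventually (ge_mem_nhds (by norm_num : (0 : ℝ) < 1 / 4))] with b hb
    have hy2 : ∀ i ∈ I b, 1 / 2 ≤ y b i := fun i hi => by linarith [(hy b i hi).2]
    set S := ∑ i ∈ I b, (1 - y b i)
    have hS : |S + Real.log (∏ i ∈ I b, y b i)| ≤ 2 * ε b * S := by
      rw [Real.log_prod fun i hi => by linarith [hy2 i hi], ← sum_add_distrib, mul_sum]
      refine (abs_sum_le_sum_abs _ _).trans (sum_le_sum fun i hi => ?_)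
      have h0 : 0 ≤ 1 - y b i := by linarith [(hy b i hi).1]
      calc _ ≤ 2 * (1 - y b i) ^ 2 := abs_one_sub_add_log_le (hy2 i hi) (hy b i hi).1
        _ ≤ 2 * ε b * (1 - y b i) := by nlinarith [(hy b i hi).2]
    have hS0 : 0 ≤ S := sum_nonneg fun i hi => by linarith [(hy b i hi).1]
    -- with `ε ≤ 1/4` the estimate `hS` also bounds `S`, so no a priori bound on it is needed
    have hSle : S ≤ -2 * Real.log (∏ i ∈ I b, y b i) := by
      nlinarith [abs_le.1 hS, mul_nonneg hS0 (by linarith : 0 ≤ 1 / 4 - ε b)]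
    calc _ ≤ 2 * ε b * S := hS
      _ ≤ 2 * |ε b| * S := by gcongr; exact le_abs_self _
      _ ≤ _ := by nlinarith [abs_nonneg (ε b)]
  have hbound : Tendsto (fun b => -4 * |ε b| * Real.log (∏ i ∈ I b, y b i)) l (𝓝 0) := by
    simpa using (hε.abs.const_mul (-4)).mul hlog
  simpa using (squeeze_zero_norm' hclose hbound).sub hlog

lemma Asymptotics.IsLittleO.tendsto_mul_nhds_zero {β : Type*} {l : Filter β} {f g h : β → ℝ}
    {c : ℝ} (hfg : f =o[l] g) (hgh : Tendsto (fun b => g b * h b) l (𝓝 c)) :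
    Tendsto (fun b => f b * h b) l (𝓝 0) :=
  (isLittleO_one_iff ℝ).1 ((hfg.mul_isBigO (isBigO_refl h l)).trans_isBigO (hgh.isBigO_one ℝ))

lemma natCast_div_add_le_div {n s k : ℕ} (hs : 0 < s) : ((n / (s + k) : ℕ) : ℝ) ≤ n / s := by
  rw [le_div_iff₀ (by exact_mod_cast hs)]
  exact_mod_cast (Nat.mul_le_mul_left _ (Nat.le_add_right s k)).trans (Nat.div_mul_le_self n _)

section Asymptotics

variable {Ω : Type*} [MeasurableSpace Ω] {P : Measure Ω} [IsProbabilityMeasure P]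
  {X : ℕ → Ω → ℝ} {F : ℝ → ℝ} {xs : ℕ → ℝ} {q p s : ℕ → ℕ} {α : ℕ → ℝ} {τ L : ℝ}

lemma tendsto_sum_one_sub_pr_tails (hmeas : ∀ i, Measurable (X i))
    (hF : ∀ i, 1 ≤ i → ∀ t : ℝ, pr P {ω | X i ω ≤ t} = F t)
    (hFbar : Tendsto (fun n : ℕ => (n : ℝ) * (1 - F (xs n))) atTop (𝓝 τ))
    (hspos : ∀ m, 1 ≤ s m) (hps : (fun n : ℕ => (p n : ℝ)) =o[atTop] (fun n : ℕ => (s n : ℝ))) :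
    Tendsto (fun n => ∑ i ∈ Icc 1 (n / (s n + q n)), (1 - pr P (allLe X
      (Set.Icc ((i - 1) * (s n + q n) + (s n - p n + 1)) ((i - 1) * (s n + q n) + s n)) (xs n))))
      atTop (𝓝 0) := by
  have hlim : Tendsto (fun n : ℕ => (p n / s n : ℝ) * (n * (1 - F (xs n)))) atTop (𝓝 0) := by
    simpa using hps.tendsto_div_nhds_zero.mul hFbar
  refine squeeze_zero (fun n => sum_nonneg fun i _ => sub_nonneg.2 (pr_le_one _))
    (fun n => ?_) hlim
  have hF0 : 0 ≤ 1 - F (xs n) := one_sub_nonneg_of_pr_eq hF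
  calc _ ≤ ∑ i ∈ Icc 1 (n / (s n + q n)), (p n : ℝ) * (1 - F (xs n)) := by
        refine sum_le_sum fun i _ => (one_sub_pr_allLe_Icc_le hmeas hF (by omega)).trans ?_
        gcongr
        omega
    _ = (n / (s n + q n) : ℕ) * (p n * (1 - F (xs n))) := by simp
    _ ≤ (n / s n) * (p n * (1 - F (xs n))) := by
        gcongr
        exact natCast_div_add_le_div (hspos n)
    _ = _ := by ring

lemma tendsto_prod_pr_blocks (hmeas : ∀ i, Measurable (X i))
    (hF : ∀ i, 1 ≤ i → ∀ t : ℝ, pr P {ω | X i ω ≤ t} = F t) (hbd : AIMBound P X xs q α)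
    (hFbar : Tendsto (fun n : ℕ => (n : ℝ) * (1 - F (xs n))) atTop (𝓝 τ))
    (hnα : (fun n : ℕ => (n : ℝ) * α n) =o[atTop] (fun n : ℕ => (p n : ℝ)))
    (hqp : (fun n : ℕ => (q n : ℝ)) =o[atTop] (fun n : ℕ => (p n : ℝ)))
    (hML : Tendsto (fun n => pr P (allLe X (Set.Icc 1 n) (xs n))) atTop (𝓝 L))
    (hspos : ∀ m, 1 ≤ s m) (hps : (fun n : ℕ => (p n : ℝ)) =o[atTop] (fun n : ℕ => (s n : ℝ)))
    (hs : (fun n : ℕ => (s n : ℝ)) =o[atTop] (fun n : ℕ => (n : ℝ))) :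
    Tendsto (fun n => ∏ i ∈ Icc 1 (n / (s n + q n)), pr P (allLe X
      (Set.Icc ((i - 1) * (s n + q n) + 1) ((i - 1) * (s n + q n) + s n)) (xs n))) atTop (𝓝 L) := by
  have hqs := hqp.trans hps
  have herr : Tendsto (fun n : ℕ => |(n : ℝ) * α n / s n| + (q n / s n : ℝ) * (n * (1 - F (xs n))) +
      3 * (s n * (1 - F (xs n)))) atTop (𝓝 0) := by
    simpa using (((hnα.trans hps).tendsto_div_nhds_zero.abs.add
      (hqs.tendsto_div_nhds_zero.mul hFbar)).add ((hs.tendsto_mul_nhds_zero hFbar).const_mul 3))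
  have hclose : ∀ᶠ n : ℕ in atTop, |∏ i ∈ Icc 1 (n / (s n + q n)), pr P (allLe X
      (Set.Icc ((i - 1) * (s n + q n) + 1) ((i - 1) * (s n + q n) + s n)) (xs n)) -
      pr P (allLe X (Set.Icc 1 n) (xs n))| ≤ |(n : ℝ) * α n / s n| +
        (q n / s n : ℝ) * (n * (1 - F (xs n))) + 3 * (s n * (1 - F (xs n))) := by
    filter_upwards [hqs.bound one_pos] with n hqsn
    rw [Real.norm_natCast, Real.norm_natCast, one_mul, Nat.cast_le] at hqsn
    have hF0 : 0 ≤ 1 - F (xs n) := one_sub_nonneg_of_pr_eq hF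
    have hsplit : |(n : ℝ) * α n / s n| + (q n / s n : ℝ) * (n * (1 - F (xs n))) =
        (n / s n : ℝ) * (|α n| + q n * (1 - F (xs n))) := by
      rw [abs_div, abs_mul, Nat.abs_cast, Nat.abs_cast]
      ring
    rw [hsplit, ← mul_assoc]
    refine (abs_prod_blocks_sub_pr_allLe_le hmeas hF hbd (hspos n) hqsn).trans ?_
    gcongr
    · exact natCast_div_add_le_div (hspos n)
    · linarith [(Nat.cast_le (α := ℝ)).2 hqsn]
  simpa using (squeeze_zero_norm' hclose herr).add hML

lemma tendsto_sum_one_sub_pr_blocks (hmeas : ∀ i, Measurable (X i))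
    (hF : ∀ i, 1 ≤ i → ∀ t : ℝ, pr P {ω | X i ω ≤ t} = F t) (hbd : AIMBound P X xs q α)
    (hFbar : Tendsto (fun n : ℕ => (n : ℝ) * (1 - F (xs n))) atTop (𝓝 τ))
    (hnα : (fun n : ℕ => (n : ℝ) * α n) =o[atTop] (fun n : ℕ => (p n : ℝ)))
    (hqp : (fun n : ℕ => (q n : ℝ)) =o[atTop] (fun n : ℕ => (p n : ℝ)))
    (hL0 : 0 < L) (hML : Tendsto (fun n => pr P (allLe X (Set.Icc 1 n) (xs n))) atTop (𝓝 L))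
    (hspos : ∀ m, 1 ≤ s m) (hps : (fun n : ℕ => (p n : ℝ)) =o[atTop] (fun n : ℕ => (s n : ℝ)))
    (hs : (fun n : ℕ => (s n : ℝ)) =o[atTop] (fun n : ℕ => (n : ℝ))) :
    Tendsto (fun n => ∑ i ∈ Icc 1 (n / (s n + q n)), (1 - pr P (allLe X
      (Set.Icc ((i - 1) * (s n + q n) + 1) ((i - 1) * (s n + q n) + s n)) (xs n))))
      atTop (𝓝 (-Real.log L)) := by
  refine tendsto_sum_one_sub_of_tendsto_prod hL0 (fun n i _ => ⟨pr_le_one _, ?_⟩)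
    (hs.tendsto_mul_nhds_zero hFbar)
    (tendsto_prod_pr_blocks hmeas hF hbd hFbar hnα hqp hML hspos hps hs)
  refine (one_sub_pr_allLe_Icc_le hmeas hF (by omega)).trans ?_
  gcongr
  · exact one_sub_nonneg_of_pr_eq hF
  · omega

end Asymptotics

theorem stmt13_general {Ω : Type*} [MeasurableSpace Ω] (P : Measure Ω) [IsProbabilityMeasure P]
    (X : ℕ → Ω → ℝ) (F : ℝ → ℝ) (xs : ℕ → ℝ) (q : ℕ → ℕ) (α : ℕ → ℝ) (p : ℕ → ℕ)
    (τ : ℝ)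
    (hmeas : ∀ i, Measurable (X i))
    (hF : ∀ i, 1 ≤ i → ∀ t : ℝ, pr P {ω | X i ω ≤ t} = F t)
    (hbd : AIMBound P X xs q α)
    (hFbar : Tendsto (fun n : ℕ => (n : ℝ) * (1 - F (xs n))) atTop (nhds τ))
    (hnα : (fun n : ℕ => (n : ℝ) * α n) =o[atTop] (fun n : ℕ => (p n : ℝ)))
    (hqp : (fun n : ℕ => (q n : ℝ)) =o[atTop] (fun n : ℕ => (p n : ℝ)))
    (L : ℝ) (hL0 : 0 < L) (hL1 : L < 1)
    (hML : Tendsto (fun n => pr P (allLe X (Set.Icc 1 n) (xs n))) atTop (nhds L))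
    (s : ℕ → ℕ) (hspos : ∀ m, 1 ≤ s m)
    (hps : (fun n : ℕ => (p n : ℝ)) =o[atTop] (fun n : ℕ => (s n : ℝ)))
    (hs : (fun n : ℕ => (s n : ℝ)) =o[atTop] (fun n : ℕ => (n : ℝ))) :
    Tendsto (fun n : ℕ => ∑ i ∈ Finset.Icc 1 (n / (s n + q n)),
        pr P {ω | (∃ j : ℕ, 1 ≤ j ∧ j ≤ s n - p n ∧
            xs n < X ((i - 1) * (s n + q n) + j) ω) ∧
          ∀ j : ℕ, s n - p n + 1 ≤ j → j ≤ s n →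
            X ((i - 1) * (s n + q n) + j) ω ≤ xs n})
      atTop (nhds (-Real.log L)) ∧
    Tendsto (fun n : ℕ => ∑ i ∈ Finset.Icc 1 (n / (s n + q n)),
        pr P {ω | ∃ j : ℕ, s n - p n + 1 ≤ j ∧ j ≤ s n ∧
            xs n < X ((i - 1) * (s n + q n) + j) ω})
      atTop (nhds 0) ∧
    (fun n : ℕ => ∑ i ∈ Finset.Icc 1 (n / (s n + q n)),
        pr P {ω | ∃ j : ℕ, s n - p n + 1 ≤ j ∧ j ≤ s n ∧
            xs n < X ((i - 1) * (s n + q n) + j) ω}) =o[atTop]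
      (fun n : ℕ => ∑ i ∈ Finset.Icc 1 (n / (s n + q n)),
        pr P {ω | (∃ j : ℕ, 1 ≤ j ∧ j ≤ s n - p n ∧
            xs n < X ((i - 1) * (s n + q n) + j) ω) ∧
          ∀ j : ℕ, s n - p n + 1 ≤ j → j ≤ s n →
            X ((i - 1) * (s n + q n) + j) ω ≤ xs n}) := by
  have hblocks := tendsto_sum_one_sub_pr_blocks hmeas hF hbd hFbar hnα hqp hL0 hML hspos hps hs
  have htails := tendsto_sum_one_sub_pr_tails (q := q) hmeas hF hFbar hspos hps
  have hsum₁ : Tendsto (fun n : ℕ => ∑ i ∈ Finset.Icc 1 (n / (s n + q n)),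
      pr P {ω | (∃ j : ℕ, 1 ≤ j ∧ j ≤ s n - p n ∧ xs n < X ((i - 1) * (s n + q n) + j) ω) ∧
        ∀ j : ℕ, s n - p n + 1 ≤ j → j ≤ s n → X ((i - 1) * (s n + q n) + j) ω ≤ xs n})
      atTop (𝓝 (-Real.log L)) := by
    refine (sub_zero (-Real.log L) ▸ hblocks.sub htails).congr fun n => ?_
    rw [← sum_sub_distrib]
    refine sum_congr rfl fun i _ => ?_
    rw [pr_exists_lt_and_forall_le hmeas (Nat.sub_le _ _)]
    ring
  have hsum₂ := htails.congr fun n => sum_congr rfl fun i _ => (pr_exists_lt hmeas _ _ _).symm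
  have hlog : -Real.log L ≠ 0 := neg_ne_zero.2 (Real.log_neg hL0 hL1).ne
  refine ⟨hsum₁, hsum₂, (isLittleO_iff_tendsto' ?_).2 ?_⟩
  · filter_upwards [hsum₁.eventually_ne hlog] with n hn h0 using absurd h0 hn
  · exact zero_div (-Real.log L) ▸ hsum₂.div hsum₁ hlog

/-- Lemma L5.4: under the assumptions of Lemma lemOB with
`P(Mₙ ≤ xₙ) → L ∈ (0,1)`, for blocks of length `sₙ` with `pₙ = o(sₙ)`, `sₙ = o(n)`,
`tₙ = ⌊n/(sₙ+qₙ)⌋`, writing `X^i_j = X_{(i−1)(sₙ+qₙ)+j}`: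
`∑_{i=1}^{tₙ} P(M^i_{0,sₙ−pₙ} > xₙ, M^i_{sₙ−pₙ,sₙ} ≤ xₙ) → −log L`,
`∑_{i=1}^{tₙ} P(M^i_{sₙ−pₙ,sₙ} > xₙ) → 0`, and in particular the second sum is
`o`(the first sum). -/
theorem stmt13 {Ω : Type*} [MeasurableSpace Ω] (P : Measure Ω) [IsProbabilityMeasure P]
    (X : ℕ → Ω → ℝ) (F : ℝ → ℝ) (xs : ℕ → ℝ) (q : ℕ → ℕ) (α : ℕ → ℝ) (p : ℕ → ℕ)
    (τ : ℝ) (hτ : 0 < τ)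
    (hmeas : ∀ i, Measurable (X i))
    (hF : ∀ i, 1 ≤ i → ∀ t : ℝ, pr P {ω | X i ω ≤ t} = F t)
    (hqpos : ∀ m, 1 ≤ q m)
    (hq : (fun n : ℕ => (q n : ℝ)) =o[atTop] (fun n : ℕ => (n : ℝ)))
    (hα : Tendsto α atTop (nhds 0))
    (hbd : AIMBound P X xs q α)
    (hFbar : Tendsto (fun n : ℕ => (n : ℝ) * (1 - F (xs n))) atTop (nhds τ))
    (hppos : ∀ m, 1 ≤ p m)
    (hp : (fun n : ℕ => (p n : ℝ)) =o[atTop] (fun n : ℕ => (n : ℝ)))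
    (hnα : (fun n : ℕ => (n : ℝ) * α n) =o[atTop] (fun n : ℕ => (p n : ℝ)))
    (hqp : (fun n : ℕ => (q n : ℝ)) =o[atTop] (fun n : ℕ => (p n : ℝ)))
    (L : ℝ) (hL0 : 0 < L) (hL1 : L < 1)
    (hML : Tendsto (fun n => pr P (allLe X (Set.Icc 1 n) (xs n))) atTop (nhds L))
    (s : ℕ → ℕ) (hspos : ∀ m, 1 ≤ s m)
    (hps : (fun n : ℕ => (p n : ℝ)) =o[atTop] (fun n : ℕ => (s n : ℝ)))
    (hs : (fun n : ℕ => (s n : ℝ)) =o[atTop] (fun n : ℕ => (n : ℝ))) :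
    Tendsto (fun n : ℕ => ∑ i ∈ Finset.Icc 1 (n / (s n + q n)),
        pr P {ω | (∃ j : ℕ, 1 ≤ j ∧ j ≤ s n - p n ∧
            xs n < X ((i - 1) * (s n + q n) + j) ω) ∧
          ∀ j : ℕ, s n - p n + 1 ≤ j → j ≤ s n →
            X ((i - 1) * (s n + q n) + j) ω ≤ xs n})
      atTop (nhds (-Real.log L)) ∧
    Tendsto (fun n : ℕ => ∑ i ∈ Finset.Icc 1 (n / (s n + q n)),
        pr P {ω | ∃ j : ℕ, s n - p n + 1 ≤ j ∧ j ≤ s n ∧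
            xs n < X ((i - 1) * (s n + q n) + j) ω})
      atTop (nhds 0) ∧
    (fun n : ℕ => ∑ i ∈ Finset.Icc 1 (n / (s n + q n)),
        pr P {ω | ∃ j : ℕ, s n - p n + 1 ≤ j ∧ j ≤ s n ∧
            xs n < X ((i - 1) * (s n + q n) + j) ω}) =o[atTop]
      (fun n : ℕ => ∑ i ∈ Finset.Icc 1 (n / (s n + q n)),
        pr P {ω | (∃ j : ℕ, 1 ≤ j ∧ j ≤ s n - p n ∧
            xs n < X ((i - 1) * (s n + q n) + j) ω) ∧
          ∀ j : ℕ, s n - p n + 1 ≤ j → j ≤ s n →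
            X ((i - 1) * (s n + q n) + j) ω ≤ xs n}) :=
  stmt13_general P X F xs q α p τ hmeas hF hbd hFbar hnα hqp L hL0 hL1 hML s hspos hps hs
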